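/- Let B be an m×m symmetric positive-definite real matrix and e₁ the first standard basis vector of ℝ^m. Then the function f(v) := vᵀ B v − 2 log(v₁) on the set {v ∈ ℝ^m : v₁ > 0} attains a unique global minimum at v* := B⁻¹ e₁ / √(e₁ᵀ B⁻¹ e₁), and the minimal value is f(v*) = 1 − log(e₁ᵀ B⁻¹ e₁). -/

import Mathlib

/-!
The vector `y = v*` satisfies `B y = (y₁)⁻¹ e₁`, which is the first-order condition for `f`.
Expanding the quadratic form around `y` gives, for `v₁ > 0`,
`f v = f y + (v - y)ᵀ B (v - y) + 2 (t - 1 - log t)` with `t = v₁ / y₁`.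
Both added terms are nonnegative (`B` is positive definite and `log t ≤ t - 1`), and the first
vanishes only at `v = y`.
-/

open Matrix

noncomputable section

/-- The optimizer `v* = B⁻¹ e₁ / √(e₁ᵀ B⁻¹ e₁)`. -/
def optVec {m : ℕ} [NeZero m] (B : Matrix (Fin m) (Fin m) ℝ) : Fin m → ℝ :=
  fun i => (B⁻¹ *ᵥ Pi.single (0 : Fin m) 1) i /
    Real.sqrt (Pi.single (0 : Fin m) 1 ⬝ᵥ (B⁻¹ *ᵥ Pi.single (0 : Fin m) 1))

/-- The objective `f(v) = vᵀ B v − 2 log v₁`. -/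
def objFun {m : ℕ} [NeZero m] (B : Matrix (Fin m) (Fin m) ℝ) (v : Fin m → ℝ) : ℝ :=
  v ⬝ᵥ (B *ᵥ v) - 2 * Real.log (v 0)

theorem Matrix.IsSymm.dotProduct_mulVec_comm {n R : Type*} [Fintype n] [CommSemiring R]
    {B : Matrix n n R} (hB : B.IsSymm) (x y : n → R) : x ⬝ᵥ B *ᵥ y = y ⬝ᵥ B *ᵥ x := by
  rw [← dotProduct_transpose_mulVec, hB.eq]

theorem Matrix.IsSymm.add_dotProduct_mulVec_add {n R : Type*} [Fintype n] [CommRing R]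
    {B : Matrix n n R} (hB : B.IsSymm) (x y : n → R) :
    (x + y) ⬝ᵥ B *ᵥ (x + y) = x ⬝ᵥ B *ᵥ x + 2 * (y ⬝ᵥ B *ᵥ x) + y ⬝ᵥ B *ᵥ y := by
  rw [mulVec_add, add_dotProduct, dotProduct_add, dotProduct_add, hB.dotProduct_mulVec_comm x y]
  ring

section Stationary

variable {n : Type*} [Fintype n] [DecidableEq n] {B : Matrix n n ℝ} {i : n} {y : n → ℝ}

theorem dotProduct_mulVec_self_eq_one_of_mulVec_eq (hy : B *ᵥ y = (y i)⁻¹ • Pi.single i 1)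
    (hyi : y i ≠ 0) : y ⬝ᵥ B *ᵥ y = 1 := by
  rw [hy, dotProduct_smul, dotProduct_single_one, smul_eq_mul, inv_mul_cancel₀ hyi]

theorem dotProduct_mulVec_sub_two_log_eq_of_mulVec_eq (hB : B.IsSymm)
    (hy : B *ᵥ y = (y i)⁻¹ • Pi.single i 1) (hyi : y i ≠ 0) {v : n → ℝ} (hvi : v i ≠ 0) :
    v ⬝ᵥ B *ᵥ v - 2 * Real.log (v i) =
      (y ⬝ᵥ B *ᵥ y - 2 * Real.log (y i)) + (v - y) ⬝ᵥ B *ᵥ (v - y) +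
        2 * (v i / y i - 1 - Real.log (v i / y i)) := by
  have hexpand := hB.add_dotProduct_mulVec_add y (v - y)
  rw [add_sub_cancel] at hexpand
  rw [hexpand, dotProduct_mulVec_self_eq_one_of_mulVec_eq hy hyi, hy, dotProduct_smul,
    dotProduct_single_one, smul_eq_mul, Pi.sub_apply, Real.log_div hvi hyi]
  field_simp
  ring

end Stationary

section OptVec

variable {m : ℕ} [NeZero m] {B : Matrix (Fin m) (Fin m) ℝ}

variable (B) in
theorem optVec_apply_zero :
    optVec B 0 = √(Pi.single 0 1 ⬝ᵥ (B⁻¹ *ᵥ Pi.single 0 1)) := by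
  rw [optVec, single_one_dotProduct, Real.div_sqrt]

theorem optVec_apply_zero_pos (hB : B.PosDef) : 0 < optVec B 0 := by
  rw [optVec_apply_zero, single_one_dotProduct, mulVec_single_one]
  exact Real.sqrt_pos.2 hB.inv.diag_pos

theorem mulVec_optVec (hB : IsUnit B.det) : B *ᵥ optVec B = (optVec B 0)⁻¹ • Pi.single 0 1 := by
  have hsmul : optVec B = (optVec B 0)⁻¹ • (B⁻¹ *ᵥ Pi.single 0 1) := by
    rw [optVec_apply_zero]
    ext j
    simp only [optVec, Pi.smul_apply, smul_eq_mul, div_eq_inv_mul]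
  rw [hsmul, mulVec_smul, mulVec_mulVec, mul_nonsing_inv B hB, one_mulVec, ← hsmul]

end OptVec

/-- For `B` symmetric positive definite, the function
`f(v) = vᵀ B v − 2 log v₁` on `{v : v₁ > 0}` attains a unique global minimum at
`v* = B⁻¹ e₁ / √(e₁ᵀ B⁻¹ e₁)`, with minimal value `f(v*) = 1 − log(e₁ᵀ B⁻¹ e₁)`. -/
theorem objFun_unique_min {m : ℕ} [NeZero m]
    (B : Matrix (Fin m) (Fin m) ℝ) (hB : B.PosDef) :
    0 < optVec B 0 ∧
    objFun B (optVec B) =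
      1 - Real.log (Pi.single (0 : Fin m) 1 ⬝ᵥ (B⁻¹ *ᵥ Pi.single (0 : Fin m) 1)) ∧
    ∀ v : Fin m → ℝ, 0 < v 0 →
      (objFun B (optVec B) ≤ objFun B v ∧
        (objFun B v = objFun B (optVec B) → v = optVec B)) := by
  have hpos := optVec_apply_zero_pos hB
  have hsymm : B.IsSymm := isHermitian_iff_isSymm.1 hB.isHermitian
  have hcrit := mulVec_optVec hB.det_pos.ne'.isUnit
  refine ⟨hpos, ?_, fun v hv => ?_⟩
  · have hc : 0 ≤ Pi.single (0 : Fin m) 1 ⬝ᵥ (B⁻¹ *ᵥ Pi.single 0 1) :=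
      Real.sqrt_pos.1 (optVec_apply_zero B ▸ hpos) |>.le
    rw [objFun, dotProduct_mulVec_self_eq_one_of_mulVec_eq hcrit hpos.ne', optVec_apply_zero,
      Real.log_sqrt hc]
    ring
  have hdecomp : objFun B v = objFun B (optVec B) + (v - optVec B) ⬝ᵥ B *ᵥ (v - optVec B) +
      2 * (v 0 / optVec B 0 - 1 - Real.log (v 0 / optVec B 0)) :=
    dotProduct_mulVec_sub_two_log_eq_of_mulVec_eq hsymm hcrit hpos.ne' hv.ne'
  have hlog := Real.log_le_sub_one_of_pos (div_pos hv hpos)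
  have hquad : 0 ≤ (v - optVec B) ⬝ᵥ B *ᵥ (v - optVec B) :=
    hB.posSemidef.dotProduct_mulVec_nonneg _
  refine ⟨by linarith, fun heq => ?_⟩
  by_contra hne
  have hquad_pos : 0 < (v - optVec B) ⬝ᵥ B *ᵥ (v - optVec B) :=
    hB.dotProduct_mulVec_pos (sub_ne_zero.2 hne)
  linarith

end
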